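/- arXiv:1504.00418 — 2 statements merged into one kernel-verified Lean document; each statement's English description precedes it below -/
import Mathlib

section
/- In the Baumslag–Solitar group BS(1,2) = ⟨x, y | y⁻¹xy = x²⟩, if y^i x^m y^{-i} = x^m with m odd and m ≠ 0, then i = 0. -/
def bsRels : Set (FreeGroup (Fin 2)) :=
  {(FreeGroup.of 1)⁻¹ * FreeGroup.of 0 * FreeGroup.of 1 *
    (FreeGroup.of 0 * FreeGroup.of 0)⁻¹}

abbrev BS := PresentedGroup bsRels

def bsx : BS := PresentedGroup.of 0
def bsy : BS := PresentedGroup.of 1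

/-- Translations of ℚ as a hom from `Multiplicative ℚ`. -/
def bsTq : Multiplicative ℚ →* Equiv.Perm ℚ where
  toFun a := Equiv.addRight a.toAdd
  map_one' := by ext q; simp
  map_mul' a b := by ext q; simp [add_comm, add_assoc, add_left_comm]

/-- Dilations of ℚ as a hom from ℚˣ. -/
def bsUq : ℚˣ →* Equiv.Perm ℚ := MulAction.toPermHom ℚˣ ℚ

def bsu : ℚˣ := (Units.mk0 2 two_ne_zero)⁻¹

def bsF : Fin 2 → Equiv.Perm ℚ :=
  ![bsTq (Multiplicative.ofAdd (1 : ℚ)), bsUq bsu]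

lemma bsTq_apply (a q : ℚ) : bsTq (Multiplicative.ofAdd a) q = q + a := rfl
lemma bsUq_apply (u : ℚˣ) (q : ℚ) : bsUq u q = u * q := rfl

lemma bsF_key : bsF 0 * bsF 1 = bsF 1 * (bsF 0 * bsF 0) := by
  ext q
  simp only [bsF, Matrix.cons_val_zero, Matrix.cons_val_one, Matrix.head_cons,
    Equiv.Perm.mul_apply, bsTq_apply, bsUq_apply]
  have : (bsu : ℚ) = 2⁻¹ := by
    rw [bsu, Units.val_inv_eq_inv_val, Units.val_mk0]
  rw [this]
  ring

lemma bsF_rels : ∀ r ∈ bsRels, FreeGroup.lift bsF r = 1 := by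
  intro r hr
  rcases hr with rfl
  simp only [map_mul, map_inv, FreeGroup.lift_apply_of]
  rw [mul_inv_eq_one, mul_assoc, inv_mul_eq_iff_eq_mul]
  exact bsF_key

noncomputable def bsφ : BS →* Equiv.Perm ℚ := PresentedGroup.toGroup bsF_rels

lemma bsφ_x : bsφ bsx = bsTq (Multiplicative.ofAdd (1 : ℚ)) :=
  PresentedGroup.toGroup.of bsF_rels

lemma bsφ_y : bsφ bsy = bsUq bsu :=
  PresentedGroup.toGroup.of bsF_rels

lemma bsTq_pow (n : ℤ) :
    bsTq (Multiplicative.ofAdd (1 : ℚ)) ^ n = bsTq (Multiplicative.ofAdd (n : ℚ)) := by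
  rw [← map_zpow]
  congr 1
  rw [← ofAdd_zsmul]
  norm_num

/-- In BS(1,2), if y^i x^m y^{-i} = x^m with m odd and m ≠ 0, then i = 0. -/
theorem stmt8 (i m : ℤ) (hodd : Odd m) (hm : m ≠ 0)
    (h : bsy ^ i * bsx ^ m * bsy ^ (-i) = bsx ^ m) : i = 0 := by
  have h2 := congrArg bsφ h
  simp only [map_mul, map_zpow, bsφ_x, bsφ_y] at h2
  rw [bsTq_pow, ← map_zpow, ← map_zpow] at h2
  have h3 := congrArg (fun (p : Equiv.Perm ℚ) => p 0) h2
  simp only [Equiv.Perm.mul_apply, bsTq_apply, bsUq_apply] at h3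
  have hval : ((bsu ^ i : ℚˣ) : ℚ) = (2:ℚ)⁻¹ ^ i := by
    rw [Units.val_zpow_eq_zpow_val, bsu, Units.val_inv_eq_inv_val, Units.val_mk0]
  have hval' : ((bsu ^ (-i) : ℚˣ) : ℚ) = (2:ℚ)⁻¹ ^ (-i) := by
    rw [Units.val_zpow_eq_zpow_val, bsu, Units.val_inv_eq_inv_val, Units.val_mk0]
  rw [hval, hval', mul_zero, zero_add] at h3
  have h5 : (2:ℚ)⁻¹ ^ i = 1 := by
    have hmne : (m:ℚ) ≠ 0 := Int.cast_ne_zero.mpr hm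
    exact (mul_eq_right₀ hmne).mp h3
  have hinj := zpow_right_injective₀ (a := (2:ℚ)⁻¹) (by norm_num) (by norm_num)
  exact hinj (by simpa using h5)
end

section
/- Define words u_{n,m} inductively: u_{n,0} = [y^{-E_n} x y^{E_n}, x³]·[y^{-E_n} x y^{E_n}, x⁵]·[y^{-E_n} x y^{E_n}, x⁷], and u_{n,m+1} is obtained from u_{n,m} by replacing each subword y^{±E_{n-m}} with t⁻¹ y^{-E_{n-m-1}} x^{±1} y^{E_{n-m-1}} t. Then for each m ≤ n, u_{n,m} = u_{n,0} as elements of the Baumslag–Gersten group G, and hence u_n := u_{n,n} represents the identity in G. -/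
/-- Tower of exponentials: E 0 = 1, E (n+1) = 2^(E n). -/
def E : ℕ → ℕ
  | 0 => 1
  | n + 1 => 2 ^ E n

/-- Relators of the Baumslag–Gersten group G = ⟨x, y, t | y⁻¹xy = x², t⁻¹xt = y⟩. -/
def bgRels : Set (FreeGroup (Fin 3)) :=
  {(FreeGroup.of 1)⁻¹ * FreeGroup.of 0 * FreeGroup.of 1 *
      (FreeGroup.of 0 * FreeGroup.of 0)⁻¹,
   (FreeGroup.of 2)⁻¹ * FreeGroup.of 0 * FreeGroup.of 2 * (FreeGroup.of 1)⁻¹}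

abbrev BG := PresentedGroup bgRels

def gx : BG := PresentedGroup.of 0
def gy : BG := PresentedGroup.of 1
def gt : BG := PresentedGroup.of 2

/-- The element of G represented by the word standing for y^{E k} after m replacement
steps: `Yv 0 k = y^{E k}` and `Yv (m+1) k = t⁻¹ (Yv m (k-1))⁻¹ x (Yv m (k-1)) t`. -/
def Yv : ℕ → ℕ → BG
  | 0, k => gy ^ E k
  | m + 1, k => gt⁻¹ * (Yv m (k - 1))⁻¹ * gx * Yv m (k - 1) * gt

/-- The element of G represented by the word u_{n,m} (with [a,b] = a⁻¹b⁻¹ab). -/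
def uElt (n m : ℕ) : BG :=
  let c := Yv m n
  let a := c⁻¹ * gx * c
  (a⁻¹ * (gx ^ 3)⁻¹ * a * gx ^ 3) * (a⁻¹ * (gx ^ 5)⁻¹ * a * gx ^ 5) *
    (a⁻¹ * (gx ^ 7)⁻¹ * a * gx ^ 7)

lemma bg_rel_one {r : FreeGroup (Fin 3)} (hr : r ∈ bgRels) :
    (QuotientGroup.mk r : BG) = 1 :=
  (QuotientGroup.eq_one_iff r).mpr (Subgroup.subset_normalClosure hr)

lemma rel1 : gy⁻¹ * gx * gy = gx * gx := by
  have h := bg_rel_one (r := (FreeGroup.of 1)⁻¹ * FreeGroup.of 0 * FreeGroup.of 1 *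
      (FreeGroup.of 0 * FreeGroup.of 0)⁻¹) (by left; rfl)
  have h' : gy⁻¹ * gx * gy * (gx * gx)⁻¹ = 1 := h
  exact mul_inv_eq_one.mp h'

lemma rel2 : gt⁻¹ * gx * gt = gy := by
  have h := bg_rel_one (r := (FreeGroup.of 2)⁻¹ * FreeGroup.of 0 * FreeGroup.of 2 *
      (FreeGroup.of 1)⁻¹) (by right; rfl)
  have h' : gt⁻¹ * gx * gt * gy⁻¹ = 1 := h
  exact mul_inv_eq_one.mp h'

lemma conj_pow_aux (g x : BG) (n : ℕ) : g⁻¹ * x ^ n * g = (g⁻¹ * x * g) ^ n := by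
  induction n with
  | zero => simp
  | succ n ih => rw [pow_succ, pow_succ, ← ih]; group

lemma conj_y_pow (a : ℕ) : (gy ^ a)⁻¹ * gx * gy ^ a = gx ^ (2 ^ a) := by
  induction a with
  | zero => simp
  | succ a ih =>
    have : (gy ^ (a + 1))⁻¹ * gx * gy ^ (a + 1)
        = gy⁻¹ * ((gy ^ a)⁻¹ * gx * gy ^ a) * gy := by
      rw [pow_succ]; group
    rw [this, ih]
    rw [conj_pow_aux, rel1, ← pow_two, ← pow_mul, pow_succ, mul_comm (2 ^ a) 2]

lemma conj_t_pow (a : ℕ) : gt⁻¹ * gx ^ a * gt = gy ^ a := by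
  rw [conj_pow_aux, rel2]

lemma Yv_eq (m k : ℕ) (h : m ≤ k) : Yv m k = gy ^ E k := by
  induction m generalizing k with
  | zero => rfl
  | succ m ih =>
    have h1 : m ≤ k - 1 := by omega
    rw [Yv, ih _ h1, mul_assoc gt⁻¹, mul_assoc gt⁻¹, conj_y_pow, conj_t_pow]
    have hk : k - 1 + 1 = k := by omega
    rw [show (2:ℕ) ^ E (k - 1) = E (k - 1 + 1) from rfl, hk]

/-- For each m ≤ n, u_{n,m} = u_{n,0} in G, and u_n := u_{n,n} represents the identity. -/
theorem stmt16 (n : ℕ) :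
    (∀ m ≤ n, uElt n m = uElt n 0) ∧ uElt n n = 1 := by
  constructor
  · intro m hm
    simp only [uElt]
    rw [Yv_eq m n hm, Yv_eq 0 n (Nat.zero_le n)]
  · simp only [uElt]
    rw [Yv_eq n n le_rfl, conj_y_pow]
    have hcomm : ∀ a b : ℕ, Commute (gx ^ a) (gx ^ b) := fun a b =>
      (Commute.refl gx).pow_pow a b
    have h3 := (hcomm (2 ^ E n) 3).eq
    have h5 := (hcomm (2 ^ E n) 5).eq
    have h7 := (hcomm (2 ^ E n) 7).eq
    -- commutator of commuting elements is 1
    have key : ∀ b : ℕ, (gx ^ (2 ^ E n))⁻¹ * (gx ^ b)⁻¹ * gx ^ (2 ^ E n) * gx ^ b = 1 := by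
      intro b
      have := (hcomm (2 ^ E n) b).inv_left.eq
      calc (gx ^ (2 ^ E n))⁻¹ * (gx ^ b)⁻¹ * gx ^ (2 ^ E n) * gx ^ b
          = (gx ^ (2 ^ E n))⁻¹ * ((gx ^ b)⁻¹ * gx ^ (2 ^ E n)) * gx ^ b := by group
        _ = (gx ^ (2 ^ E n))⁻¹ * (gx ^ (2 ^ E n) * (gx ^ b)⁻¹) * gx ^ b := by
            rw [((hcomm (2 ^ E n) b).inv_right.eq).symm]
        _ = 1 := by group
    rw [key 3, key 5, key 7]
    simp
end
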